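/- arXiv:math/9710222 — 4 statements merged into one kernel-verified Lean document; each statement's English description precedes it below -/
import Mathlib

section
/- Let r = p^m with p prime and let A = 𝔽_r[T] be the polynomial ring over the finite field 𝔽_r. Let v be a nonzero prime ideal of A and equip A with its v-adic topology (the topology in which the powers vᵏ form a basis of neighborhoods of 0). Then for every n ≥ 0 the n-th Hasse derivative D_n : A → A is continuous with respect to the v-adic topology on source and target. -/
open Polynomial

namespace Polynomial

/-- By the Leibniz rule, `hasseDeriv n` of a product of `s` elements of `I` differentiates at most
`n` of the factors, so at least `s - n` of them survive. -/
theorem hasseDeriv_mem_pow_sub {R : Type*} [CommSemiring R] (I : Ideal R[X]) (s : ℕ) :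
    ∀ n : ℕ, ∀ f ∈ I ^ s, hasseDeriv n f ∈ I ^ (s - n) := by
  induction s with
  | zero => simp
  | succ s ih =>
    intro n f hf
    rw [pow_succ'] at hf
    refine Submodule.mul_induction_on hf (fun a ha b hb => ?_) fun f g hf hg => ?_
    · rw [hasseDeriv_mul]
      refine Ideal.sum_mem _ fun ⟨i, j⟩ hij => ?_
      rw [Finset.HasAntidiagonal.mem_antidiagonal] at hij
      dsimp only at hij ⊢
      rcases Nat.eq_zero_or_pos i with rfl | hi
      · rw [hasseDeriv_zero']
        refine Ideal.pow_le_pow_right (show s + 1 - n ≤ s - j + 1 by omega) ?_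
        rw [pow_succ']
        exact Ideal.mul_mem_mul ha (ih j b hb)
      · exact Ideal.mul_mem_left _ _ (Ideal.pow_le_pow_right (by omega) (ih j b hb))
    · rw [map_add]
      exact add_mem hf hg

theorem continuous_hasseDeriv_adicTopology {R : Type*} [CommRing R] (I : Ideal R[X]) (n : ℕ) :
    @Continuous R[X] R[X] I.adicTopology I.adicTopology (hasseDeriv n) := by
  let := I.adicTopology
  have := I.nonarchimedean
  refine continuous_of_continuousAt_zero (hasseDeriv n).toAddMonoidHom ?_
  rw [ContinuousAt, map_zero,
    I.hasBasis_nhds_zero_adic.tendsto_iff I.hasBasis_nhds_zero_adic]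
  exact fun k _ => ⟨k + n, trivial, fun f hf => by
    simpa using hasseDeriv_mem_pow_sub I (k + n) n f hf⟩

end Polynomial

theorem stmt_10_general (Fr : Type*) [Field Fr] (v : Ideal (Polynomial Fr)) (n : ℕ) :
    @Continuous (Polynomial Fr) (Polynomial Fr) v.adicTopology v.adicTopology
      (fun f => hasseDeriv n f) :=
  continuous_hasseDeriv_adicTopology v n

/-- for a nonzero prime `v` of `A = 𝔽_r[T]`, every Hasse derivative
`D_n : A → A` is continuous for the `v`-adic topology. -/
theorem stmt_10 (p m : ℕ) [Fact p.Prime] (hm : 0 < m)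
    (Fr : Type*) [Field Fr] [Fintype Fr] (hcard : Fintype.card Fr = p ^ m)
    (v : Ideal (Polynomial Fr)) (hv : v.IsPrime) (hv0 : v ≠ ⊥) (n : ℕ) :
    @Continuous (Polynomial Fr) (Polynomial Fr) v.adicTopology v.adicTopology
      (fun f => hasseDeriv n f) :=
  stmt_10_general Fr v n
end

section
/- Let R be a commutative ring and let D_n : R[X] → R[X] denote the n-th Hasse derivative. Let f, c ∈ R[X] and let m ≥ n ≥ 0 be integers. Then f^{m−n} divides D_n(c·f^m) in R[X]. -/
open Polynomial

namespace Polynomial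

variable {R : Type*} [CommRing R]

/-- In the Leibniz expansion of `Dₙ (fᵐ⁺¹) = Dₙ (fᵐ · f)`, the term `Dₙ (fᵐ) · f` gains a factor `f`
from the new factor, while every other term `Dᵢ (fᵐ) · Dⱼ f` has `i < n`, so loses fewer factors. -/
theorem pow_sub_dvd_hasseDeriv_pow (f : R[X]) (m n : ℕ) :
    f ^ (m - n) ∣ hasseDeriv n (f ^ m) := by
  induction m generalizing n with
  | zero => simp
  | succ m ih =>
    rw [pow_succ, hasseDeriv_mul]
    refine Finset.dvd_sum fun ⟨i, j⟩ hij => ?_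
    rw [Finset.HasAntidiagonal.mem_antidiagonal] at hij
    obtain rfl | hj := Nat.eq_zero_or_pos j
    · rw [hasseDeriv_zero', ← hij, add_zero]
      calc f ^ (m + 1 - i) ∣ f ^ (m - i) * f := pow_succ f (m - i) ▸ pow_dvd_pow f (by omega)
        _ ∣ hasseDeriv i (f ^ m) * f := mul_dvd_mul_right (ih i) f
    · exact ((pow_dvd_pow f (by omega)).trans (ih i)).mul_right _

theorem pow_sub_dvd_hasseDeriv_mul_pow (c f : R[X]) (m n : ℕ) :
    f ^ (m - n) ∣ hasseDeriv n (c * f ^ m) := by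
  rw [hasseDeriv_mul]
  refine Finset.dvd_sum fun ⟨i, j⟩ hij => ?_
  rw [Finset.HasAntidiagonal.mem_antidiagonal] at hij
  exact ((pow_dvd_pow f (by omega)).trans (pow_sub_dvd_hasseDeriv_pow f m j)).mul_left _

end Polynomial

theorem stmt_11_general (R : Type*) [CommRing R] (f c : R[X]) (n m : ℕ) :
    f ^ (m - n) ∣ hasseDeriv n (c * f ^ m) :=
  pow_sub_dvd_hasseDeriv_mul_pow c f m n

/-- `f^{m−n}` divides the `n`-th Hasse derivative of `c·f^m`. -/
theorem stmt_11 (R : Type*) [CommRing R] (f c : R[X]) (n m : ℕ) (h : n ≤ m) :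
    f ^ (m - n) ∣ hasseDeriv n (c * f ^ m) :=
  stmt_11_general R f c n m
end

section
/- Let r = p^m with p prime and let A = 𝔽_r[θ]. For integers d ≥ 0 and j ≥ 1 let S_d(j) := Σ n^j ∈ A, the sum over all monic polynomials n ∈ A of degree d. Then for each fixed j ≥ 1 there exists D such that S_d(j) = 0 for all d ≥ D. (Equivalently, the power series z_ζ(x,−j) = Σ_{d≥0} S_d(j)·x^{−d} is a polynomial in x^{−1}.) -/
open Polynomial

/-- The `j`-th power sum `S_d(j) = ∑ n^j` over the monic polynomials `n` of degree `d` in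
`𝔽_r[θ]`, with monic polynomials of degree `d` parametrized by their lower-order
coefficients. -/
noncomputable def monicPowerSum (Fr : Type*) [Field Fr] [Fintype Fr] (d j : ℕ) :
    Polynomial Fr :=
  ∑ c : Fin d → Fr, (X ^ d + ∑ i : Fin d, Polynomial.C (c i) * X ^ i.1) ^ j

open Finset in
/-- Key lemma: `S_d(j) = 0` whenever `j < d`, by strong induction on `j`, using the
recursion obtained by splitting off the constant coefficient. -/
lemma monicPowerSum_eq_zero (K : Type*) [Field K] [Fintype K] :
    ∀ j d : ℕ, j < d → monicPowerSum K d j = 0 := by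
  intro j
  induction j using Nat.strong_induction_on with
  | _ j IH =>
  intro d hd
  obtain ⟨e, rfl⟩ : ∃ e, d = e + 1 := ⟨d - 1, by omega⟩
  classical
  have hbase : ∀ (a : K) (c' : Fin e → K),
      X ^ (e + 1) + ∑ i : Fin (e + 1), C (Fin.cons a c' i) * X ^ i.1
        = X * (X ^ e + ∑ i : Fin e, C (c' i) * X ^ i.1) + C a := by
    intro a c'
    rw [Fin.sum_univ_succ]
    simp only [Fin.cons_zero, Fin.cons_succ, Fin.val_zero, Fin.val_succ, pow_zero, mul_one]
    rw [mul_add, Finset.mul_sum,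
      Finset.sum_congr rfl fun (i : Fin e) _ =>
        show C (c' i) * X ^ (i.1 + 1) = X * (C (c' i) * X ^ i.1) by ring]
    ring
  unfold monicPowerSum
  rw [← Equiv.sum_comp (Fin.consEquiv fun _ : Fin (e + 1) => K)]
  simp only [Fin.consEquiv_apply]
  rw [Fintype.sum_prod_type]
  simp_rw [hbase]
  rw [Finset.sum_comm]
  have expand : ∀ c' : Fin e → K,
      ∑ a : K, (X * (X ^ e + ∑ i : Fin e, C (c' i) * X ^ i.1) + C a) ^ j
        = ∑ k ∈ range (j + 1),
            (X * (X ^ e + ∑ i : Fin e, C (c' i) * X ^ i.1)) ^ k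
              * C (∑ a : K, a ^ (j - k)) * (j.choose k : K[X]) := by
    intro c'
    simp_rw [add_pow, ← C_pow]
    rw [Finset.sum_comm]
    refine Finset.sum_congr rfl fun k _ => ?_
    rw [map_sum, Finset.mul_sum, Finset.sum_mul]
  rw [Finset.sum_congr rfl fun c' _ => expand c', Finset.sum_comm]
  refine Finset.sum_eq_zero fun k hk => ?_
  by_cases hjk : j - k = 0
  · have hs : (∑ a : K, a ^ (j - k)) = 0 := by
      rw [hjk]
      simp [Finset.card_univ, Nat.cast_card_eq_zero]
    simp [hs]
  · have hk' : k < j := by have := Finset.mem_range.mp hk; omega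
    have hke : k < e := by omega
    have h0 : (∑ c' : Fin e → K, (X ^ e + ∑ i : Fin e, C (c' i) * X ^ i.1) ^ k) = 0 :=
      IH k hk' e hke
    simp_rw [mul_pow, mul_assoc]
    rw [← Finset.mul_sum, ← Finset.sum_mul, h0, zero_mul, mul_zero]

/-- for each fixed `j ≥ 1`, the power sums `S_d(j)` of monic polynomials of
degree `d` vanish for all sufficiently large `d`. -/
theorem stmt_14 (p m : ℕ) [Fact p.Prime] (hm : 0 < m)
    (Fr : Type*) [Field Fr] [Fintype Fr] (hcard : Fintype.card Fr = p ^ m)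
    (j : ℕ) (hj : 1 ≤ j) :
    ∃ D : ℕ, ∀ d ≥ D, monicPowerSum Fr d j = 0 :=
  ⟨j + 1, fun d hd => monicPowerSum_eq_zero Fr j d (by omega)⟩
end

section
/- Let r = p^m with p prime and let A = 𝔽_r[θ]. For integers d ≥ 0 and j ≥ 1 let S_d(j) := Σ n^j ∈ A, the sum over all monic polynomials n ∈ A of degree d. If j ≥ 1 is divisible by r − 1, then for all sufficiently large N one has Σ_{d=0}^{N} S_d(j) = 0 in A. (Equivalently, the zeta value ζ_A(−j) = Σ_{n monic} n^j, a finite sum, vanishes: the 'trivial zero' of the Goss zeta function at −j.) -/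
open Polynomial

noncomputable def lowSum (Fr : Type*) [Field Fr] [Fintype Fr] (n j : ℕ) : Polynomial Fr :=
  ∑ c : Fin n → Fr, (∑ i : Fin n, Polynomial.C (c i) * X ^ i.1) ^ j

lemma lowSum_eq_zero (Fr : Type*) [Field Fr] [Fintype Fr] (n j : ℕ) (hj : j < n) :
    lowSum Fr n j = 0 := by
  classical
  unfold lowSum
  have key : ∀ g : Fin j → Fin n,
      (∑ c : Fin n → Fr, ∏ t : Fin j, c (g t)) = 0 := by
    intro g
    -- g is not surjective
    have hns : ¬ Function.Surjective g := by
      intro hs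
      have := Fintype.card_le_of_surjective g hs
      simp at this
      omega
    simp only [Function.Surjective, not_forall] at hns
    obtain ⟨i₀, hi₀⟩ := hns
    simp only [not_exists] at hi₀
    -- split at i₀
    have hre := Fintype.sum_equiv (Equiv.piSplitAt i₀ (fun _ => Fr))
      (fun c : Fin n → Fr => ∏ t : Fin j, c (g t))
      (fun c : Fr × ({ k // k ≠ i₀ } → Fr) => ∏ t : Fin j, c.2 ⟨g t, fun h => hi₀ t h⟩)
      (by
        intro c
        apply Finset.prod_congr rfl
        intro t _
        simp [Equiv.piSplitAt])
    rw [hre, Fintype.sum_prod_type]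
    simp only [Finset.sum_const, Finset.card_univ]
    rw [nsmul_eq_mul, FiniteField.cast_card_eq_zero, zero_mul]
  calc (∑ c : Fin n → Fr, (∑ i : Fin n, Polynomial.C (c i) * X ^ i.1) ^ j)
      = ∑ c : Fin n → Fr, ∑ g : Fin j → Fin n, ∏ t, Polynomial.C (c (g t)) * X ^ (g t).1 := by
        apply Finset.sum_congr rfl; intro c _; rw [Fintype.sum_pow]
    _ = ∑ g : Fin j → Fin n, ∑ c : Fin n → Fr, ∏ t, Polynomial.C (c (g t)) * X ^ (g t).1 :=
        Finset.sum_comm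
    _ = 0 := by
        apply Finset.sum_eq_zero
        intro g _
        have : ∀ c : Fin n → Fr, (∏ t, Polynomial.C (c (g t)) * X ^ (g t).1)
            = Polynomial.C (∏ t, c (g t)) * ∏ t, X ^ (g t).1 := by
          intro c
          rw [Finset.prod_mul_distrib, map_prod]
        simp only [this]
        rw [← Finset.sum_mul, ← map_sum, key g, map_zero, zero_mul]

lemma lowSum_succ (Fr : Type*) [Field Fr] [Fintype Fr] (n j : ℕ)
    (hdvd : (Fintype.card Fr - 1) ∣ j) :
    lowSum Fr (n + 1) j = lowSum Fr n j - monicPowerSum Fr n j := by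
  classical
  have h1 := Fintype.sum_equiv (Fin.snocEquiv (fun _ : Fin (n + 1) => Fr))
    (fun ac : Fr × (Fin n → Fr) =>
      (Polynomial.C ac.1 * X ^ n + ∑ i : Fin n, Polynomial.C (ac.2 i) * X ^ i.1) ^ j)
    (fun c : Fin (n + 1) → Fr => (∑ i : Fin (n + 1), Polynomial.C (c i) * X ^ i.1) ^ j)
    (by
      intro ac
      congr 1
      rw [Fin.sum_univ_castSucc]
      simp [Fin.snoc_castSucc, Fin.snoc_last, add_comm])
  have h2 : lowSum Fr (n + 1) j
      = ∑ a : Fr, ∑ c : Fin n → Fr,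
          (Polynomial.C a * X ^ n + ∑ i : Fin n, Polynomial.C (c i) * X ^ i.1) ^ j := by
    rw [lowSum, ← h1, Fintype.sum_prod_type]
  -- sum over a ≠ 0 equals monicPowerSum for each a
  have h3 : ∀ a : Fr, a ≠ 0 →
      (∑ c : Fin n → Fr,
        (Polynomial.C a * X ^ n + ∑ i : Fin n, Polynomial.C (c i) * X ^ i.1) ^ j)
      = monicPowerSum Fr n j := by
    intro a ha
    have haj : a ^ j = 1 := by
      obtain ⟨k, hk⟩ := hdvd
      rw [hk, pow_mul, FiniteField.pow_card_sub_one_eq_one a ha, one_pow]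
    rw [monicPowerSum]
    refine (Fintype.sum_equiv (Equiv.piCongrRight fun _ : Fin n => Equiv.mulLeft₀ a ha) _ _ ?_).symm
    intro c
    simp only [Equiv.piCongrRight_apply, Equiv.mulLeft₀_apply, Pi.map_apply]
    have : Polynomial.C a * X ^ n + ∑ i : Fin n, Polynomial.C (a * c i) * X ^ i.1
        = Polynomial.C a * (X ^ n + ∑ i : Fin n, Polynomial.C (c i) * X ^ i.1) := by
      rw [mul_add, Finset.mul_sum]
      congr 1
      apply Finset.sum_congr rfl
      intro i _
      rw [map_mul, mul_assoc]
    rw [this, mul_pow, ← map_pow, haj, map_one, one_mul]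
  rw [h2, ← Finset.sum_erase_add _ _ (Finset.mem_univ (0 : Fr))]
  have h4 : (∑ a ∈ Finset.univ.erase (0 : Fr), ∑ c : Fin n → Fr,
      (Polynomial.C a * X ^ n + ∑ i : Fin n, Polynomial.C (c i) * X ^ i.1) ^ j)
      = (Fintype.card Fr - 1) • monicPowerSum Fr n j := by
    rw [Finset.sum_congr rfl (fun a ha => h3 a (Finset.ne_of_mem_erase ha)),
      Finset.sum_const, Finset.card_erase_of_mem (Finset.mem_univ _), Finset.card_univ]
  have h5 : ((Fintype.card Fr - 1 : ℕ) : Polynomial Fr) = -1 := by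
    have hc1 : 1 ≤ Fintype.card Fr := Fintype.card_pos
    rw [Nat.cast_sub hc1, Nat.cast_one, ← Polynomial.C_eq_natCast,
      FiniteField.cast_card_eq_zero, map_zero, zero_sub]
  rw [h4, nsmul_eq_mul, h5]
  have h6 : (∑ c : Fin n → Fr,
      (Polynomial.C (0 : Fr) * X ^ n + ∑ i : Fin n, Polynomial.C (c i) * X ^ i.1) ^ j)
      = lowSum Fr n j := by
    simp [lowSum]
  rw [h6]; ring


/-- if `r − 1` divides `j ≥ 1`, the (eventually constant) partial sums
`∑_{d=0}^{N} S_d(j)` vanish for all sufficiently large `N`: the "trivial zero"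
`ζ_A(−j) = ∑_{n monic} n^j = 0` of the Goss zeta function. -/
theorem stmt_15 (p m : ℕ) [Fact p.Prime] (hm : 0 < m)
    (Fr : Type*) [Field Fr] [Fintype Fr] (hcard : Fintype.card Fr = p ^ m)
    (j : ℕ) (hj : 1 ≤ j) (hdvd : (Fintype.card Fr - 1) ∣ j) :
    ∃ M : ℕ, ∀ N ≥ M, ∑ d ∈ Finset.range (N + 1), monicPowerSum Fr d j = 0 := by
  have hrec : ∀ N : ℕ, lowSum Fr N j = - ∑ d ∈ Finset.range N, monicPowerSum Fr d j := by
    intro N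
    induction N with
    | zero =>
      simp [lowSum, zero_pow (by omega : j ≠ 0)]
    | succ n ih =>
      rw [lowSum_succ Fr n j hdvd, ih, Finset.sum_range_succ]
      ring
  refine ⟨j, fun N hN => ?_⟩
  have := hrec (N + 1)
  rw [lowSum_eq_zero Fr (N + 1) j (by omega)] at this
  exact neg_eq_zero.mp this.symm
end
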